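/- Lemma (Case (i), upper bound). Suppose Assumptions 1 and 2 hold, let E ∈ ℝ, and let e* ∈ D(E) minimize d_l + d_u over D(E). If E + δ·Σ_j p̄_j ≤ Σ_j ē'_j, then Σ_j min(ē'_j, e*_j + δ·p̄_j) = E + δ·Σ_j p̄_j; equivalently, e*_j + δ·p̄_j ≤ ē'_j for every j. -/

import Mathlib

/-!
If some device ends strictly above its next-step upper bound, `e*_j + δ p̄_j > ē'_j`, the case
hypothesis forces another device `k` to end strictly below its own. Moving a little energy from
`j` to `k` keeps the dispersion in `D(E)`, lowers the upper-violation cost at `j` by the amount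
moved while its lower-violation cost stays zero, and does not increase the cost at `k`. This
contradicts the minimality of `e*`.
-/

open Finset

lemma Finset.exists_lt_of_sum_le_of_lt {ι : Type*} [Fintype ι] {f g : ι → ℝ}
    (hle : ∑ i, f i ≤ ∑ i, g i) {j : ι} (hj : g j < f j) : ∃ k, f k < g k := by
  by_contra! h
  exact (sum_lt_sum (fun i _ => h i) ⟨j, mem_univ j, hj⟩).not_ge hle

section Transfer

variable {ι : Type*} [DecidableEq ι]

def transfer (x : ι → ℝ) (j k : ι) (ε : ℝ) : ι → ℝ :=
  x + Pi.single k ε - Pi.single j ε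

variable {x : ι → ℝ} {j k : ι} {ε : ℝ}

lemma transfer_apply_left (hjk : j ≠ k) : transfer x j k ε j = x j - ε := by
  simp [transfer, hjk]

lemma transfer_apply_right (hjk : j ≠ k) : transfer x j k ε k = x k + ε := by
  simp [transfer, hjk.symm]

lemma transfer_apply_of_ne {i : ι} (hij : i ≠ j) (hik : i ≠ k) : transfer x j k ε i = x i := by
  simp [transfer, hij, hik]

lemma sum_transfer [Fintype ι] : ∑ i, transfer x j k ε i = ∑ i, x i := by
  simp [transfer, sum_add_distrib, sum_sub_distrib]

lemma transfer_mem_Icc {lo hi : ι → ℝ} (hx : x ∈ Set.Icc lo hi) (hjk : j ≠ k) (hε : 0 ≤ ε)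
    (hj : lo j ≤ x j - ε) (hk : x k + ε ≤ hi k) : transfer x j k ε ∈ Set.Icc lo hi := by
  have hbounds : ∀ i, lo i ≤ transfer x j k ε i ∧ transfer x j k ε i ≤ hi i := by
    intro i
    rcases eq_or_ne i j with rfl | hij
    · rw [transfer_apply_left hjk]; exact ⟨hj, by linarith [hx.2 i]⟩
    rcases eq_or_ne i k with rfl | hik
    · rw [transfer_apply_right hjk]; exact ⟨by linarith [hx.1 i], hk⟩
    rw [transfer_apply_of_ne hij hik]; exact ⟨hx.1 i, hx.2 i⟩
  exact ⟨fun i => (hbounds i).1, fun i => (hbounds i).2⟩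

lemma sum_comp_transfer_lt [Fintype ι] (f : ι → ℝ → ℝ) (hjk : j ≠ k)
    (hj : f j (x j - ε) < f j (x j)) (hk : f k (x k + ε) ≤ f k (x k)) :
    ∑ i, f i (transfer x j k ε i) < ∑ i, f i (x i) := by
  rw [← sub_neg, ← sum_sub_distrib, Fintype.sum_eq_add j k hjk fun i ⟨hij, hik⟩ => by
    rw [transfer_apply_of_ne hij hik, sub_self], transfer_apply_left hjk, transfer_apply_right hjk]
  linarith

end Transfer

section DeviceCost

/-- The contribution of one device to `d_l + d_u`, with `pl = δ p̲_j`, `pu = δ p̄_j`,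
`l = e̲'_j` and `u = ē'_j`. -/
def deviceCost (pl pu l u x : ℝ) : ℝ :=
  (max (x + pl) l - (x + pl)) + ((x + pu) - min (x + pu) u)

variable {pl pu l u x ε : ℝ}

lemma deviceCost_sub_lt (hε : 0 < ε) (hl : l ≤ x - ε + pl) (hu : u ≤ x - ε + pu) :
    deviceCost pl pu l u (x - ε) < deviceCost pl pu l u x := by
  unfold deviceCost
  rw [max_eq_left hl, max_eq_left (by linarith), min_eq_right hu, min_eq_right (by linarith)]
  linarith

lemma deviceCost_add_le (hε : 0 ≤ ε) (hu : x + ε + pu ≤ u) :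
    deviceCost pl pu l u (x + ε) ≤ deviceCost pl pu l u x := by
  unfold deviceCost
  rw [min_eq_left hu, min_eq_left (by linarith)]
  have : max (x + ε + pl) l ≤ max (x + pl) l + ε :=
    max_le (by linarith [le_max_left (x + pl) l]) (by linarith [le_max_right (x + pl) l])
  linarith

end DeviceCost

theorem case_i_upper_bound_general
    (N : ℕ) (δ : ℝ)
    (plb pub elb eub elb' eub' : Fin N → ℝ)
    -- Assumption 2(a)
    (hA2a : ∀ j, ∃ e : ℝ, elb j ≤ e ∧ e ≤ eub j ∧
      elb' j ≤ e + δ * plb j ∧ e + δ * pub j ≤ eub' j)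
    -- Assumption 2(b)
    (hA2b : ∀ j, elb j + δ * plb j ≤ elb' j ∧ eub' j ≤ eub j + δ * pub j)
    (E : ℝ) (estar : Fin N → ℝ)
    -- e* ∈ D(E)
    (hmem : (∀ j, elb j ≤ estar j ∧ estar j ≤ eub j) ∧ ∑ j, estar j = E)
    -- e* minimizes d_l + d_u over D(E)
    (hmin : ∀ e : Fin N → ℝ,
      ((∀ j, elb j ≤ e j ∧ e j ≤ eub j) ∧ ∑ j, e j = E) →
      ((∑ j, (max (estar j + δ * plb j) (elb' j) - (estar j + δ * plb j))) +
       (∑ j, ((estar j + δ * pub j) - min (estar j + δ * pub j) (eub' j)))) ≤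
      ((∑ j, (max (e j + δ * plb j) (elb' j) - (e j + δ * plb j))) +
       (∑ j, ((e j + δ * pub j) - min (e j + δ * pub j) (eub' j)))))
    -- case hypothesis
    (hcase : E + δ * ∑ j, pub j ≤ ∑ j, eub' j) :
    (∑ j, min (eub' j) (estar j + δ * pub j) = E + δ * ∑ j, pub j) ∧
    (∀ j, estar j + δ * pub j ≤ eub' j) := by
  obtain ⟨hbox, hsum⟩ := hmem
  have hbound : ∀ j, estar j + δ * pub j ≤ eub' j := by
    by_contra! ⟨j, hj⟩
    obtain ⟨k, hk⟩ := exists_lt_of_sum_le_of_lt (f := fun i => estar i + δ * pub i)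
      (by rwa [sum_add_distrib, hsum, ← mul_sum]) hj
    have hjk : j ≠ k := by rintro rfl; exact hk.not_gt hj
    -- The point `e` of Assumption 2(a) lies below `e*_j - ε`, which leaves `j` room above both
    -- `e̲_j` and `e̲'_j - δ p̲_j`.
    obtain ⟨e, hle, -, hl, hu⟩ := hA2a j
    set ε := min (estar j + δ * pub j - eub' j) (eub' k - (estar k + δ * pub k))
    have hε : 0 < ε := lt_min (by linarith) (by linarith)
    have hεj : ε ≤ estar j + δ * pub j - eub' j := min_le_left _ _
    have hεk : ε ≤ eub' k - (estar k + δ * pub k) := min_le_right _ _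
    have hmem' : transfer estar j k ε ∈ Set.Icc elb eub :=
      transfer_mem_Icc ⟨fun i => (hbox i).1, fun i => (hbox i).2⟩ hjk hε.le (by linarith)
        (by linarith [(hA2b k).2])
    have hcheaper := sum_comp_transfer_lt (x := estar)
      (fun i => deviceCost (δ * plb i) (δ * pub i) (elb' i) (eub' i)) hjk
      (deviceCost_sub_lt hε (by linarith) (by linarith)) (deviceCost_add_le hε.le (by linarith))
    have hopt := hmin _ ⟨fun i => ⟨hmem'.1 i, hmem'.2 i⟩, sum_transfer.trans hsum⟩
    rw [← sum_add_distrib, ← sum_add_distrib] at hopt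
    exact hcheaper.not_ge hopt
  refine ⟨?_, hbound⟩
  rw [sum_congr rfl fun i _ => min_eq_right (hbound i), sum_add_distrib, hsum, mul_sum]

/-- Lemma 2(b) (Case (i), upper bound). -/
theorem case_i_upper_bound
    (N : ℕ) (hN : 1 ≤ N) (δ : ℝ) (hδ : 0 < δ)
    (plb pub elb eub elb' eub' : Fin N → ℝ)
    (hp : ∀ j, plb j ≤ pub j) (he : ∀ j, elb j ≤ eub j)
    (he' : ∀ j, elb' j ≤ eub' j)
    -- Assumption 1 (consistency of constraints)
    (hA1 : ∀ j, ∀ e : ℝ, elb j ≤ e → e ≤ eub j →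
      max (elb' j) (e + δ * plb j) ≤ min (eub' j) (e + δ * pub j))
    -- Assumption 2(a)
    (hA2a : ∀ j, ∃ e : ℝ, elb j ≤ e ∧ e ≤ eub j ∧
      elb' j ≤ e + δ * plb j ∧ e + δ * pub j ≤ eub' j)
    -- Assumption 2(b)
    (hA2b : ∀ j, elb j + δ * plb j ≤ elb' j ∧ eub' j ≤ eub j + δ * pub j)
    (E : ℝ) (estar : Fin N → ℝ)
    -- e* ∈ D(E)
    (hmem : (∀ j, elb j ≤ estar j ∧ estar j ≤ eub j) ∧ ∑ j, estar j = E)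
    -- e* minimizes d_l + d_u over D(E)
    (hmin : ∀ e : Fin N → ℝ,
      ((∀ j, elb j ≤ e j ∧ e j ≤ eub j) ∧ ∑ j, e j = E) →
      ((∑ j, (max (estar j + δ * plb j) (elb' j) - (estar j + δ * plb j))) +
       (∑ j, ((estar j + δ * pub j) - min (estar j + δ * pub j) (eub' j)))) ≤
      ((∑ j, (max (e j + δ * plb j) (elb' j) - (e j + δ * plb j))) +
       (∑ j, ((e j + δ * pub j) - min (e j + δ * pub j) (eub' j)))))
    -- case hypothesis
    (hcase : E + δ * ∑ j, pub j ≤ ∑ j, eub' j) :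
    (∑ j, min (eub' j) (estar j + δ * pub j) = E + δ * ∑ j, pub j) ∧
    (∀ j, estar j + δ * pub j ≤ eub' j) :=
  case_i_upper_bound_general N δ plb pub elb eub elb' eub' hA2a hA2b E estar hmem hmin hcase
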